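/- Thin tunnel example: For δ > 0 and σ ∈ (0, π/2), define y : (0,1)×(1/2, 1/2+δ) → ℝ² by y(x₁,x₂) = ((x₂ - 1/2) + 1/σ)(sin(σx₁), cos(σx₁)). Then dist²(∇y(x), SO(2)) = σ²(x₂ - 1/2)² for all x in the domain, and consequently ∫_{(0,1)×(1/2,1/2+δ)} dist²(∇y, SO(2)) dx = σ² δ³ / 3. -/

import Mathlib

/-!
The gradient is `∇y(x) = R(σx₁) · diag(c, 1)` with `R(φ)` a rotation and
`c = 1 + σ(x₂ − 1/2)`. For a rotation `Q` at angle `θ` from `R(φ)`,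
`|R(φ) · diag(c, 1) − Q|² = (c − 1)² + 2(c + 1)(1 − cos θ)`, so for `c ≥ −1` the nearest
rotation is `R(σx₁)` itself and `dist(∇y(x), SO(2)) = |c − 1| = σ(x₂ − 1/2)`. The energy is
then `σ² ∫ (x₂ − 1/2)²` over a strip of width one, i.e. `σ²δ³/3`.
-/

open Real Set MeasureTheory

/-- The Frobenius norm of a real `d × d` matrix. -/
noncomputable def frob {d : ℕ} (F : Matrix (Fin d) (Fin d) ℝ) : ℝ :=
  Real.sqrt (∑ i, ∑ j, (F i j)^2)

/-- The special orthogonal group `SO(d)` as a set of matrices. -/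
def SOd (d : ℕ) : Set (Matrix (Fin d) (Fin d) ℝ) :=
  {R | R.transpose * R = 1 ∧ R.det = 1}

/-- The Frobenius distance of a matrix to `SO(d)`. -/
noncomputable def distSO {d : ℕ} (F : Matrix (Fin d) (Fin d) ℝ) : ℝ :=
  sInf ((fun R => frob (F - R)) '' SOd d)

/-- The thin-tunnel bending deformation
`y(x₁,x₂) = ((x₂ − 1/2) + 1/σ)(sin(σx₁), cos(σx₁))`. -/
noncomputable def ytunnel (σ : ℝ) (p : ℝ × ℝ) : ℝ × ℝ :=
  ((p.2 - 1/2 + 1/σ) * Real.sin (σ * p.1), (p.2 - 1/2 + 1/σ) * Real.cos (σ * p.1))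

/-- The gradient matrix `∇y(p)` of a map `y : ℝ² → ℝ²`. -/
noncomputable def gradMat (y : ℝ × ℝ → ℝ × ℝ) (p : ℝ × ℝ) : Matrix (Fin 2) (Fin 2) ℝ :=
  !![(fderiv ℝ y p ((1:ℝ), (0:ℝ))).1, (fderiv ℝ y p ((0:ℝ), (1:ℝ))).1;
     (fderiv ℝ y p ((1:ℝ), (0:ℝ))).2, (fderiv ℝ y p ((0:ℝ), (1:ℝ))).2]

theorem distSO_eq_frob_sub_of_forall_le {d : ℕ} {F R₀ : Matrix (Fin d) (Fin d) ℝ}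
    (hR₀ : R₀ ∈ SOd d) (h : ∀ R ∈ SOd d, frob (F - R₀) ≤ frob (F - R)) :
    distSO F = frob (F - R₀) :=
  IsLeast.csInf_eq ⟨mem_image_of_mem _ hR₀, forall_mem_image.2 h⟩

theorem rotation_mem_SOd_two (φ : ℝ) : !![cos φ, sin φ; -sin φ, cos φ] ∈ SOd 2 := by
  refine ⟨?_, ?_⟩
  · ext i j
    fin_cases i <;> fin_cases j <;>
      simp [Matrix.mul_apply, Fin.sum_univ_two, ← sq, mul_comm]
  · rw [Matrix.det_fin_two_of]
    linear_combination sin_sq_add_cos_sq φ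

theorem SOd_two_entries {R : Matrix (Fin 2) (Fin 2) ℝ} (hR : R ∈ SOd 2) :
    R 1 1 = R 0 0 ∧ R 0 1 = -R 1 0 ∧ R 0 0 ^ 2 + R 1 0 ^ 2 = 1 := by
  obtain ⟨hRR, hdet⟩ := hR
  have e00 := congrFun (congrFun hRR 0) 0
  have e01 := congrFun (congrFun hRR 0) 1
  simp only [Matrix.mul_apply, Matrix.transpose_apply, Fin.sum_univ_two, Matrix.one_apply_eq,
    Matrix.one_apply_ne zero_ne_one] at e00 e01
  rw [Matrix.det_fin_two] at hdet
  refine ⟨?_, ?_, by linear_combination e00⟩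
  · linear_combination -R 1 1 * e00 + R 0 0 * hdet + R 1 0 * e01
  · linear_combination -R 0 1 * e00 - R 1 0 * hdet + R 0 0 * e01

noncomputable abbrev stretchedRotation (c φ : ℝ) : Matrix (Fin 2) (Fin 2) ℝ :=
  !![c * cos φ, sin φ; -(c * sin φ), cos φ]

theorem distSO_stretchedRotation {c : ℝ} (hc : -1 ≤ c) (φ : ℝ) :
    distSO (stretchedRotation c φ) = |c - 1| := by
  have h_opt : ∑ i, ∑ j, ((stretchedRotation c φ - !![cos φ, sin φ; -sin φ, cos φ]) i j) ^ 2
      = (c - 1) ^ 2 := by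
    simp only [Fin.sum_univ_two, Matrix.sub_apply, Matrix.of_apply, Matrix.cons_val',
      Matrix.cons_val_zero, Matrix.cons_val_one, Matrix.cons_val_fin_one]
    linear_combination (c - 1) ^ 2 * sin_sq_add_cos_sq φ
  have h_lower : ∀ R ∈ SOd 2,
      (c - 1) ^ 2 ≤ ∑ i, ∑ j, ((stretchedRotation c φ - R) i j) ^ 2 := by
    intro R hR
    obtain ⟨h11, h01, hab⟩ := SOd_two_entries hR
    -- `R₀₀ cos φ - R₁₀ sin φ` is the cosine of the angle between `R` and the rotation part.
    have ht : R 0 0 * cos φ - R 1 0 * sin φ ≤ 1 := by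
      nlinarith [sq_nonneg (R 0 0 * sin φ + R 1 0 * cos φ), sin_sq_add_cos_sq φ]
    simp only [Fin.sum_univ_two, Matrix.sub_apply, Matrix.of_apply, Matrix.cons_val',
      Matrix.cons_val_zero, Matrix.cons_val_one, Matrix.cons_val_fin_one, h11, h01]
    nlinarith [sin_sq_add_cos_sq φ]
  rw [distSO_eq_frob_sub_of_forall_le (rotation_mem_SOd_two φ), frob, h_opt, sqrt_sq_eq_abs]
  intro R hR
  rw [frob, frob, h_opt]
  exact sqrt_le_sqrt (h_lower R hR)

theorem gradMat_ytunnel {σ : ℝ} (hσ : σ ≠ 0) (p : ℝ × ℝ) :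
    gradMat (ytunnel σ) p = stretchedRotation (1 + σ * (p.2 - 1/2)) (σ * p.1) := by
  have h_radius : HasFDerivAt (fun q : ℝ × ℝ => q.2 - 1/2 + 1/σ)
      (ContinuousLinearMap.snd ℝ ℝ ℝ) p :=
    (hasFDerivAt_snd.sub_const _).add_const _
  have h_angle : HasFDerivAt (fun q : ℝ × ℝ => σ * q.1)
      (σ • ContinuousLinearMap.fst ℝ ℝ ℝ) p := hasFDerivAt_fst.const_mul σ
  have hy : HasFDerivAt (ytunnel σ) _ p :=
    (h_radius.mul ((hasDerivAt_sin _).comp_hasFDerivAt p h_angle)).prodMk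
      (h_radius.mul ((hasDerivAt_cos _).comp_hasFDerivAt p h_angle))
  rw [gradMat, hy.fderiv]
  ext i j
  fin_cases i <;> fin_cases j <;> simp [field] <;> ring

theorem distSO_gradMat_ytunnel {σ : ℝ} (hσ : σ ≠ 0) {p : ℝ × ℝ}
    (hp : -2 ≤ σ * (p.2 - 1/2)) :
    distSO (gradMat (ytunnel σ) p) = |σ * (p.2 - 1/2)| := by
  rw [gradMat_ytunnel hσ, distSO_stretchedRotation (by linarith), add_sub_cancel_left]

theorem setIntegral_Ioo_sub_sq {a b : ℝ} (hab : a ≤ b) :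
    ∫ y in Ioo a b, (y - a) ^ 2 = (b - a) ^ 3 / 3 := by
  rw [← integral_Ioc_eq_integral_Ioo, ← intervalIntegral.integral_of_le hab,
    intervalIntegral.integral_comp_sub_right (fun y => y ^ 2), integral_pow]
  ring

/-- For the thin-tunnel deformation on `(0,1)×(1/2,1/2+δ)` one has
`dist²(∇y(x), SO(2)) = σ²(x₂ − 1/2)²` pointwise, and
`∫ dist²(∇y, SO(2)) dx = σ²δ³/3`. -/
theorem thin_tunnel_energy (δ σ : ℝ) (hδ : 0 < δ) (hσ : σ ∈ Set.Ioo 0 (π/2)) :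
    (∀ p ∈ Set.Ioo (0:ℝ) 1 ×ˢ Set.Ioo (1/2 : ℝ) (1/2 + δ),
        (distSO (gradMat (ytunnel σ) p))^2 = σ^2 * (p.2 - 1/2)^2) ∧
    ∫ p in Set.Ioo (0:ℝ) 1 ×ˢ Set.Ioo (1/2 : ℝ) (1/2 + δ),
        (distSO (gradMat (ytunnel σ) p))^2 = σ^2 * δ^3 / 3 := by
  obtain ⟨hσ_pos, -⟩ := hσ
  have h_pointwise : ∀ p ∈ Ioo (0:ℝ) 1 ×ˢ Ioo (1/2 : ℝ) (1/2 + δ),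
      (distSO (gradMat (ytunnel σ) p))^2 = σ^2 * (p.2 - 1/2)^2 := fun p hp => by
    have : 0 ≤ σ * (p.2 - 1/2) := mul_nonneg hσ_pos.le (by linarith [hp.2.1])
    rw [distSO_gradMat_ytunnel hσ_pos.ne' (by linarith), sq_abs, mul_pow]
  refine ⟨h_pointwise, ?_⟩
  calc ∫ p in Ioo (0:ℝ) 1 ×ˢ Ioo (1/2 : ℝ) (1/2 + δ), (distSO (gradMat (ytunnel σ) p))^2
      = ∫ p in Ioo (0:ℝ) 1 ×ˢ Ioo (1/2 : ℝ) (1/2 + δ), 1 * (σ^2 * (p.2 - 1/2)^2) := by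
        refine setIntegral_congr_fun (measurableSet_Ioo.prod measurableSet_Ioo) fun p hp => ?_
        rw [one_mul, h_pointwise p hp]
    _ = (∫ _ in Ioo (0:ℝ) 1, (1:ℝ)) * ∫ y in Ioo (1/2 : ℝ) (1/2 + δ), σ^2 * (y - 1/2)^2 := by
        rw [Measure.volume_eq_prod]
        exact setIntegral_prod_mul (fun _ => 1) (fun y => σ^2 * (y - 1/2)^2) _ _
    _ = σ^2 * δ^3 / 3 := by
        rw [integral_const_mul, setIntegral_Ioo_sub_sq (by linarith), setIntegral_const,
          Real.volume_real_Ioo_of_le zero_le_one]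
        ring
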